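/- Let I_E(d_S, d_J) = log₂(1 + γ_S (d_S² + H²)^{−α/2} / (γ_J (d_J² + H²)^{−α/2} + 1)), where d_S = ‖Q_S − W_E‖ and d_J = ‖Q_J − W_E‖. If ‖W_E − Ŵ_E‖ ≤ R_E, then I_E(‖Q_S − W_E‖, ‖Q_J − W_E‖) ≤ log₂(1 + γ_S ((‖Q_S − Ŵ_E‖ − R_E)² + H²)^{−α/2} / (γ_J ((‖Q_J − Ŵ_E‖ + R_E)² + H²)^{−α/2} + 1)), provided ‖Q_S − Ŵ_E‖ ≥ R_E. -/

import Mathlib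

/-!
Moving the eavesdropper from its estimate `Ŵ_E` to any point of the uncertainty disc of radius
`R_E` changes its distance to the source by at most `R_E` and its distance to the jammer by at
most `R_E`. The path gain `(d² + H²)^(-α/2)` decreases in `d ≥ 0`, and the eavesdropper's rate
increases in the source gain and decreases in the jammer gain, so the worst case is the source at
distance `‖Q_S − Ŵ_E‖ − R_E` and the jammer at distance `‖Q_J − Ŵ_E‖ + R_E`.
-/

open Real

noncomputable section

def pathGain (H α d : ℝ) : ℝ := (d ^ 2 + H ^ 2) ^ (-(α / 2))

def jammedRate (b γS γJ gS gJ : ℝ) : ℝ := logb b (1 + γS * gS / (γJ * gJ + 1))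

end

lemma pathGain_nonneg (H α d : ℝ) : 0 ≤ pathGain H α d := by
  unfold pathGain; positivity

lemma pathGain_antitoneOn {H α : ℝ} (hH : H ≠ 0) (hα : 0 ≤ α) :
    AntitoneOn (pathGain H α) (Set.Ici 0) := by
  intro d₁ hd₁ d₂ _ hd
  exact rpow_le_rpow_of_nonpos (by positivity) (by gcongr) (by linarith)

lemma jammedRate_le_jammedRate {b γS γJ gS gS' gJ gJ' : ℝ} (hb : 1 < b) (hγS : 0 ≤ γS)
    (hγJ : 0 ≤ γJ) (hgS : 0 ≤ gS) (hgJ' : 0 ≤ gJ') (hS : gS ≤ gS') (hJ : gJ' ≤ gJ) :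
    jammedRate b γS γJ gS gJ ≤ jammedRate b γS γJ gS' gJ' := by
  have hgS' : 0 ≤ gS' := hgS.trans hS
  have hgJ : 0 ≤ gJ := hgJ'.trans hJ
  unfold jammedRate
  gcongr

theorem stmt_11_general (QS QJ WE WhatE : EuclideanSpace ℝ (Fin 2))
    (γS γJ H α RE : ℝ) (hγS : 0 < γS) (hγJ : 0 < γJ) (hH : 0 < H) (hα : 2 ≤ α)
    (hest : ‖WE - WhatE‖ ≤ RE) (hfar : ‖QS - WhatE‖ ≥ RE) :
    Real.logb 2 (1 + γS * (‖QS - WE‖ ^ 2 + H ^ 2) ^ (-(α / 2)) /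
        (γJ * (‖QJ - WE‖ ^ 2 + H ^ 2) ^ (-(α / 2)) + 1)) ≤
      Real.logb 2 (1 + γS * ((‖QS - WhatE‖ - RE) ^ 2 + H ^ 2) ^ (-(α / 2)) /
        (γJ * ((‖QJ - WhatE‖ + RE) ^ 2 + H ^ 2) ^ (-(α / 2)) + 1)) := by
  change jammedRate 2 γS γJ (pathGain H α ‖QS - WE‖) (pathGain H α ‖QJ - WE‖) ≤
    jammedRate 2 γS γJ (pathGain H α (‖QS - WhatE‖ - RE)) (pathGain H α (‖QJ - WhatE‖ + RE))
  have hsource : ‖QS - WhatE‖ - RE ≤ ‖QS - WE‖ := by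
    linarith [norm_sub_le_norm_sub_add_norm_sub QS WE WhatE]
  have hjammer : ‖QJ - WE‖ ≤ ‖QJ - WhatE‖ + RE := by
    linarith [norm_sub_le_norm_sub_add_norm_sub QJ WhatE WE, norm_sub_rev WE WhatE]
  have hgain := pathGain_antitoneOn hH.ne' (by linarith : 0 ≤ α)
  apply jammedRate_le_jammedRate one_lt_two hγS.le hγJ.le (pathGain_nonneg ..) (pathGain_nonneg ..)
  · exact hgain (sub_nonneg.mpr hfar) (sub_nonneg.mpr hfar |>.trans hsource) hsource
  · exact hgain (norm_nonneg _) ((norm_nonneg _).trans hjammer) hjammer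

theorem stmt_11 (QS QJ WE WhatE : EuclideanSpace ℝ (Fin 2))
    (γS γJ H α RE : ℝ) (hγS : 0 < γS) (hγJ : 0 < γJ) (hH : 0 < H) (hα : 2 ≤ α)
    (hRE : 0 ≤ RE) (hest : ‖WE - WhatE‖ ≤ RE) (hfar : ‖QS - WhatE‖ ≥ RE) :
    Real.logb 2 (1 + γS * (‖QS - WE‖ ^ 2 + H ^ 2) ^ (-(α / 2)) /
        (γJ * (‖QJ - WE‖ ^ 2 + H ^ 2) ^ (-(α / 2)) + 1)) ≤
      Real.logb 2 (1 + γS * ((‖QS - WhatE‖ - RE) ^ 2 + H ^ 2) ^ (-(α / 2)) /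
        (γJ * ((‖QJ - WhatE‖ + RE) ^ 2 + H ^ 2) ^ (-(α / 2)) + 1)) :=
  stmt_11_general QS QJ WE WhatE γS γJ H α RE hγS hγJ hH hα hest hfar
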